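/- arXiv:2109.05540 — 3 statements merged into one kernel-verified Lean document; each statement's English description precedes it below -/
import Mathlib

section
/- Policy improvement implies Q-value dominance: in a discounted MDP with finite action space, bounded reward, and γ ∈ (0,1), if policies π_new and π_old satisfy E_{a∼π_new}[Q^{π_old}(s,a) − α log π_new(a|s)] ≥ E_{a∼π_old}[Q^{π_old}(s,a) − α log π_old(a|s)] for all states s, then Q^{π_new}(s,a) ≥ Q^{π_old}(s,a) for all (s,a). -/
open Finset

/-- The soft Bellman operator associated with a policy `π`. -/
noncomputable def softBellman {S A : Type*} [Fintype S] [Fintype A]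
    (r : S × A → ℝ) (γ α : ℝ) (p : S × A → S → ℝ) (π : S → A → ℝ)
    (Q : S × A → ℝ) : S × A → ℝ :=
  fun sa =>
    r sa + γ * ∑ s' : S, p sa s' *
      ∑ a' : A, π s' a' * (Q (s', a') - α * Real.log (π s' a'))

/-- Policy improvement implies Q-value dominance: if the soft Q-values
`Q^{π_old}` and `Q^{π_new}` are the (bounded) fixed points of the respective
soft Bellman operators, and
`E_{a∼π_new}[Q^{π_old}(s,a) − α log π_new(a|s)]
  ≥ E_{a∼π_old}[Q^{π_old}(s,a) − α log π_old(a|s)]` for all states `s`,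
then `Q^{π_new}(s,a) ≥ Q^{π_old}(s,a)` for all `(s,a)`. -/
theorem policy_improvement_Q_dominance
    {S A : Type*} [Fintype S] [Fintype A] [Nonempty S] [Nonempty A]
    (r : S × A → ℝ) (γ α : ℝ) (hγ0 : 0 < γ) (hγ1 : γ < 1) (hα : 0 ≤ α)
    (p : S × A → S → ℝ) (hp0 : ∀ sa s', 0 ≤ p sa s')
    (hp1 : ∀ sa, ∑ s' : S, p sa s' = 1)
    (πold πnew : S → A → ℝ)
    (hπold0 : ∀ s a, 0 ≤ πold s a) (hπold1 : ∀ s, ∑ a : A, πold s a = 1)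
    (hπnew0 : ∀ s a, 0 ≤ πnew s a) (hπnew1 : ∀ s, ∑ a : A, πnew s a = 1)
    (Qold Qnew : S × A → ℝ)
    (hQold : softBellman r γ α p πold Qold = Qold)
    (hQnew : softBellman r γ α p πnew Qnew = Qnew)
    (himp : ∀ s : S,
      (∑ a : A, πold s a * (Qold (s, a) - α * Real.log (πold s a))) ≤
      ∑ a : A, πnew s a * (Qold (s, a) - α * Real.log (πnew s a))) :
    ∀ s a, Qold (s, a) ≤ Qnew (s, a) := by
  classical
  have hne : (Finset.univ : Finset (S × A)).Nonempty := univ_nonempty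
  set f : S × A → ℝ := fun sa => Qold sa - Qnew sa with hf
  set M : ℝ := Finset.univ.sup' hne f with hM
  have hfM : ∀ sa : S × A, f sa ≤ M := fun sa => Finset.le_sup' f (mem_univ sa)
  have key : ∀ sa : S × A, f sa ≤ γ * M := by
    intro sa
    have h1 : Qold sa = softBellman r γ α p πold Qold sa := by rw [hQold]
    have h2 : Qnew sa = softBellman r γ α p πnew Qnew sa := by rw [hQnew]
    have step1 : Qold sa ≤ r sa + γ * ∑ s' : S, p sa s' *
        ∑ a' : A, πnew s' a' * (Qold (s', a') - α * Real.log (πnew s' a')) := by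
      rw [h1]; unfold softBellman
      have : (∑ s' : S, p sa s' *
          ∑ a' : A, πold s' a' * (Qold (s', a') - α * Real.log (πold s' a'))) ≤
          ∑ s' : S, p sa s' *
          ∑ a' : A, πnew s' a' * (Qold (s', a') - α * Real.log (πnew s' a')) := by
        refine Finset.sum_le_sum fun s' _ => ?_
        exact mul_le_mul_of_nonneg_left (himp s') (hp0 sa s')
      nlinarith [this]
    have hdiff : f sa ≤ γ * ∑ s' : S, p sa s' *
        ∑ a' : A, πnew s' a' * f (s', a') := by
      have h2' : Qnew sa = r sa + γ * ∑ s' : S, p sa s' *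
          ∑ a' : A, πnew s' a' * (Qnew (s', a') - α * Real.log (πnew s' a')) := by
        rw [h2]; rfl
      have heq : (∑ s' : S, p sa s' *
          ∑ a' : A, πnew s' a' * (Qold (s', a') - α * Real.log (πnew s' a')))
          - (∑ s' : S, p sa s' *
          ∑ a' : A, πnew s' a' * (Qnew (s', a') - α * Real.log (πnew s' a')))
          = ∑ s' : S, p sa s' * ∑ a' : A, πnew s' a' * f (s', a') := by
        rw [← Finset.sum_sub_distrib]
        refine Finset.sum_congr rfl fun s' _ => ?_
        rw [← mul_sub, ← Finset.sum_sub_distrib]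
        congr 1
        refine Finset.sum_congr rfl fun a' _ => ?_
        simp only [hf]; ring
      have := step1
      simp only [hf]
      nlinarith [heq, h2', this]
    have hin : (∑ s' : S, p sa s' * ∑ a' : A, πnew s' a' * f (s', a')) ≤ M := by
      calc (∑ s' : S, p sa s' * ∑ a' : A, πnew s' a' * f (s', a'))
          ≤ ∑ s' : S, p sa s' * M := by
            refine Finset.sum_le_sum fun s' _ => ?_
            refine mul_le_mul_of_nonneg_left ?_ (hp0 sa s')
            calc (∑ a' : A, πnew s' a' * f (s', a'))
                ≤ ∑ a' : A, πnew s' a' * M :=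
                  Finset.sum_le_sum fun a' _ =>
                    mul_le_mul_of_nonneg_left (hfM (s', a')) (hπnew0 s' a')
              _ = M := by rw [← Finset.sum_mul, hπnew1 s', one_mul]
        _ = M := by rw [← Finset.sum_mul, hp1 sa, one_mul]
    calc f sa ≤ γ * ∑ s' : S, p sa s' * ∑ a' : A, πnew s' a' * f (s', a') := hdiff
      _ ≤ γ * M := mul_le_mul_of_nonneg_left hin hγ0.le
  have hM0 : M ≤ 0 := by
    obtain ⟨sa0, _, hsa0⟩ := Finset.exists_mem_eq_sup' hne f
    have hMe : M = f sa0 := hM.trans hsa0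
    have : M ≤ γ * M := by rw [hMe]; exact hMe ▸ key sa0
    nlinarith
  intro s a
  have := hfM (s, a)
  simp only [hf] at this
  linarith
end

section
/- Convergence of soft policy iteration: in a discounted MDP with finite state and action spaces, bounded reward, and γ ∈ (0,1), the sequence of soft Q-functions Q^{π_k} produced by alternating exact soft policy evaluation and exact soft policy improvement is pointwise monotonically nondecreasing and uniformly bounded, hence converges pointwise. -/
/-!
Gibbs' inequality says that for every distribution `w` on the actions,
`E_w[f] + α H(w) ≤ α log ∑ₐ exp (f a / α)`, with equality at the softmax of `f / α`.
Hence soft policy improvement gives `Q_k ≤ T^{π_{k+1}} Q_k`, and since `T^{π_{k+1}}` is monotone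
and contracts by `γ` in the sup norm, its fixed point `Q_{k+1}` lies above `Q_k`. An entropy term
is at most `α log |A|`, so every fixed point satisfies `‖Q‖ ≤ R + γ (‖Q‖ + α log |A|)`.
A monotone bounded sequence of reals converges.
-/

open Finset Filter

section Averages

variable {ι : Type*} [Fintype ι] {w v : ι → ℝ} {D : ℝ}

lemma le_one_of_mem_stdSimplex (hw : w ∈ stdSimplex ℝ ι) (i : ι) : w i ≤ 1 :=
  hw.2 ▸ single_le_sum (fun j _ => hw.1 j) (mem_univ i)

lemma sum_mul_le_of_mem_stdSimplex (hw : w ∈ stdSimplex ℝ ι) (hv : ∀ i, v i ≤ D) :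
    ∑ i, w i * v i ≤ D :=
  calc ∑ i, w i * v i ≤ ∑ i, w i * D :=
        sum_le_sum fun i _ => mul_le_mul_of_nonneg_left (hv i) (hw.1 i)
    _ = D := by rw [← sum_mul, hw.2, one_mul]

lemma abs_sum_mul_le_of_mem_stdSimplex (hw : w ∈ stdSimplex ℝ ι) (hv : ∀ i, |v i| ≤ D) :
    |∑ i, w i * v i| ≤ D := by
  have hneg : ∑ i, w i * -v i ≤ D :=
    sum_mul_le_of_mem_stdSimplex hw fun i => neg_le.1 (abs_le.1 (hv i)).1
  simp only [mul_neg, sum_neg_distrib] at hneg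
  exact abs_le.2 ⟨neg_le.1 hneg, sum_mul_le_of_mem_stdSimplex hw fun i => (abs_le.1 (hv i)).2⟩

end Averages

section Gibbs

open Real

lemma mul_sub_log_le_sub {w q : ℝ} (hw : 0 ≤ w) (hq : 0 < q) :
    w * (log q - log w) ≤ q - w := by
  rcases hw.eq_or_lt with rfl | hw
  · simpa using hq.le
  have h := log_le_sub_one_of_pos (div_pos hq hw)
  rw [log_div hq.ne' hw.ne'] at h
  calc w * (log q - log w) ≤ w * (q / w - 1) := mul_le_mul_of_nonneg_left h hw.le
    _ = q - w := by field_simp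

lemma sum_mul_log_sub_log_le {ι : Type*} [Fintype ι] {w q : ι → ℝ} (hw : ∀ i, 0 ≤ w i)
    (hq : ∀ i, 0 < q i) : ∑ i, w i * (log (q i) - log (w i)) ≤ ∑ i, q i - ∑ i, w i := by
  rw [← sum_sub_distrib]
  exact sum_le_sum fun i _ => mul_sub_log_le_sub (hw i) (hq i)

end Gibbs

section SoftValue

open Real

variable {A : Type*} [Fintype A] (α : ℝ)

/-- `E_w[f] + α H(w)`, the entropy-regularized value of `f` under `w`. -/
noncomputable def softValue (w f : A → ℝ) : ℝ :=
  ∑ a, w a * (f a - α * log (w a))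

noncomputable def logSumExp (f : A → ℝ) : ℝ :=
  α * log (∑ a, exp (f a / α))

noncomputable def softmax (f : A → ℝ) (a : A) : ℝ :=
  exp (f a / α) / ∑ b, exp (f b / α)

variable {α} [Nonempty A] {w f : A → ℝ} {M : ℝ}

lemma sum_exp_pos (f : A → ℝ) : 0 < ∑ b, exp (f b / α) :=
  sum_pos (fun _ _ => exp_pos _) univ_nonempty

lemma softmax_pos (f : A → ℝ) (a : A) : 0 < softmax α f a :=
  div_pos (exp_pos _) (sum_exp_pos f)

lemma softmax_mem_stdSimplex (f : A → ℝ) : softmax α f ∈ stdSimplex ℝ A :=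
  ⟨fun a => (softmax_pos f a).le, by
    simp only [softmax, ← sum_div, div_self (sum_exp_pos f).ne']⟩

lemma log_softmax (f : A → ℝ) (a : A) :
    log (softmax α f a) = f a / α - log (∑ b, exp (f b / α)) := by
  rw [softmax, log_div (exp_ne_zero _) (sum_exp_pos f).ne', log_exp]

lemma softValue_eq_sum_mul_log_softmax_add (hα : α ≠ 0) (w f : A → ℝ) :
    softValue α w f =
      α * ∑ a, w a * (log (softmax α f a) - log (w a)) + (∑ a, w a) * logSumExp α f := by
  rw [softValue, logSumExp, mul_sum, sum_mul, ← sum_add_distrib]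
  refine sum_congr rfl fun a _ => ?_
  rw [log_softmax]
  field_simp
  ring

lemma softValue_le_logSumExp (hα : 0 < α) (hw : w ∈ stdSimplex ℝ A) (f : A → ℝ) :
    softValue α w f ≤ logSumExp α f := by
  have hgibbs := sum_mul_log_sub_log_le hw.1 (softmax_pos (α := α) f)
  rw [(softmax_mem_stdSimplex f).2, hw.2, sub_self] at hgibbs
  rw [softValue_eq_sum_mul_log_softmax_add hα.ne', hw.2, one_mul]
  linarith [mul_nonpos_of_nonneg_of_nonpos hα.le hgibbs]

lemma softValue_softmax (hα : α ≠ 0) (f : A → ℝ) : softValue α (softmax α f) f = logSumExp α f := by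
  simp [softValue_eq_sum_mul_log_softmax_add hα, log_softmax, (softmax_mem_stdSimplex f).2]

lemma logSumExp_le (hα : 0 < α) (hf : ∀ a, f a ≤ M) :
    logSumExp α f ≤ M + α * log (Fintype.card A) := by
  have hsum : ∑ a, exp (f a / α) ≤ Fintype.card A * exp (M / α) := by
    simpa using sum_le_sum fun a (_ : a ∈ univ) =>
      exp_le_exp.2 (div_le_div_of_nonneg_right (hf a) hα.le)
  have hlog := log_le_log (sum_exp_pos f) hsum
  rw [log_mul (by simp) (exp_ne_zero _), log_exp] at hlog
  calc logSumExp α f ≤ α * (log (Fintype.card A) + M / α) := mul_le_mul_of_nonneg_left hlog hα.le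
    _ = M + α * log (Fintype.card A) := by field_simp; ring

omit [Nonempty A] in
lemma sum_mul_le_softValue (hα : 0 ≤ α) (hw : w ∈ stdSimplex ℝ A) (f : A → ℝ) :
    ∑ a, w a * f a ≤ softValue α w f :=
  sum_le_sum fun a _ => by
    nlinarith [mul_log_nonpos (hw.1 a) (le_one_of_mem_stdSimplex hw a)]

lemma abs_softValue_le (hα : 0 < α) (hw : w ∈ stdSimplex ℝ A) (hf : ∀ a, |f a| ≤ M) :
    |softValue α w f| ≤ M + α * log (Fintype.card A) := by
  have hlog : 0 ≤ α * log (Fintype.card A) := mul_nonneg hα.le (log_natCast_nonneg _)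
  have hlower := sum_mul_le_softValue hα.le hw f
  have hM : -M ≤ ∑ a, w a * f a := (abs_le.1 (abs_sum_mul_le_of_mem_stdSimplex hw hf)).1
  refine abs_le.2 ⟨by linarith, ?_⟩
  exact (softValue_le_logSumExp hα hw f).trans (logSumExp_le hα fun a => (abs_le.1 (hf a)).2)

end SoftValue

lemma le_div_one_sub_of_forall_le_add_mul {X : Type*} [Finite X] {u : X → ℝ} {c γ : ℝ}
    (hγ : γ < 1) (h : ∀ M, (∀ y, u y ≤ M) → ∀ x, u x ≤ c + γ * M) (x : X) :
    u x ≤ c / (1 - γ) := by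
  have : Nonempty X := ⟨x⟩
  obtain ⟨x₀, hx₀⟩ := Finite.exists_max u
  have hmax := h _ hx₀ x₀
  rw [le_div_iff₀ (sub_pos.2 hγ)]
  nlinarith [hx₀ x]

section SoftBellman

variable {S A : Type*} [Fintype S] [Fintype A] {r : S × A → ℝ} {γ α : ℝ} {p : S × A → S → ℝ}
  {π : S → A → ℝ} {Q Q' : S × A → ℝ}

lemma softBellman_eq_softValue (sa : S × A) :
    softBellman r γ α p π Q sa =
      r sa + γ * ∑ s', p sa s' * softValue α (π s') (fun a => Q (s', a)) :=
  rfl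

lemma softBellman_sub_softBellman (sa : S × A) :
    softBellman r γ α p π Q sa - softBellman r γ α p π Q' sa =
      γ * ∑ s', p sa s' * ∑ a, π s' a * (Q (s', a) - Q' (s', a)) := by
  simp only [softBellman, add_sub_add_left_eq_sub, ← mul_sub, ← sum_sub_distrib]
  congr! 4 with s' - a -
  ring

lemma softBellman_le_softBellman_softmax [Nonempty A] (hγ : 0 ≤ γ) (hα : 0 < α)
    (hp : ∀ sa s', 0 ≤ p sa s') (hπ : ∀ s, π s ∈ stdSimplex ℝ A) {π' : S → A → ℝ}
    (hπ' : ∀ s, π' s = softmax α (fun a => Q (s, a))) (sa : S × A) :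
    softBellman r γ α p π Q sa ≤ softBellman r γ α p π' Q sa := by
  simp only [softBellman_eq_softValue, hπ', softValue_softmax hα.ne']
  gcongr with s'
  exacts [hp sa s', softValue_le_logSumExp hα (hπ s') _]

lemma le_of_le_softBellman (hγ0 : 0 ≤ γ) (hγ1 : γ < 1) (hp : ∀ sa, p sa ∈ stdSimplex ℝ S)
    (hπ : ∀ s, π s ∈ stdSimplex ℝ A) (hQ : ∀ sa, Q sa ≤ softBellman r γ α p π Q sa)
    (hQ' : softBellman r γ α p π Q' = Q') (sa : S × A) : Q sa ≤ Q' sa := by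
  suffices Q sa - Q' sa ≤ 0 / (1 - γ) by simpa [sub_nonpos] using this
  refine le_div_one_sub_of_forall_le_add_mul (u := fun x => Q x - Q' x) hγ1 (fun M hM x => ?_) sa
  calc Q x - Q' x ≤ softBellman r γ α p π Q x - softBellman r γ α p π Q' x := by
        linarith [hQ x, congrFun hQ' x]
    _ = γ * ∑ s', p x s' * ∑ a, π s' a * (Q (s', a) - Q' (s', a)) := softBellman_sub_softBellman x
    _ ≤ 0 + γ * M := by
        rw [zero_add]
        exact mul_le_mul_of_nonneg_left (sum_mul_le_of_mem_stdSimplex (hp x) fun s' =>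
          sum_mul_le_of_mem_stdSimplex (hπ s') fun a => hM _) hγ0

lemma abs_le_of_softBellman_eq [Nonempty A] {R : ℝ} (hr : ∀ sa, |r sa| ≤ R) (hγ0 : 0 ≤ γ)
    (hγ1 : γ < 1) (hα : 0 < α) (hp : ∀ sa, p sa ∈ stdSimplex ℝ S)
    (hπ : ∀ s, π s ∈ stdSimplex ℝ A) (hQ : softBellman r γ α p π Q = Q) (sa : S × A) :
    |Q sa| ≤ (R + γ * (α * Real.log (Fintype.card A))) / (1 - γ) := by
  refine le_div_one_sub_of_forall_le_add_mul (u := fun x => |Q x|) hγ1 (fun M hM x => ?_) sa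
  have hsoft : |∑ s', p x s' * softValue α (π s') (fun a => Q (s', a))|
      ≤ M + α * Real.log (Fintype.card A) :=
    abs_sum_mul_le_of_mem_stdSimplex (hp x) fun s' => abs_softValue_le hα (hπ s') fun a => hM _
  rw [← hQ, softBellman_eq_softValue]
  calc |r x + γ * ∑ s', p x s' * softValue α (π s') (fun a => Q (s', a))|
      ≤ |r x| + γ * |∑ s', p x s' * softValue α (π s') (fun a => Q (s', a))| := by
        rw [← abs_of_nonneg hγ0, ← abs_mul, abs_of_nonneg hγ0]; exact abs_add_le _ _
    _ ≤ R + γ * (M + α * Real.log (Fintype.card A)) := by gcongr; exact hr x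
    _ = R + γ * (α * Real.log (Fintype.card A)) + γ * M := by ring

end SoftBellman

theorem soft_policy_iteration_converges_general
    {S A : Type*} [Fintype S] [Fintype A] [Nonempty A]
    (r : S × A → ℝ) (R_max : ℝ) (hr : ∀ sa, |r sa| ≤ R_max)
    (γ α : ℝ) (hγ0 : 0 < γ) (hγ1 : γ < 1) (hα : 0 < α)
    (p : S × A → S → ℝ) (hp0 : ∀ sa s', 0 ≤ p sa s')
    (hp1 : ∀ sa, ∑ s' : S, p sa s' = 1)
    (π : ℕ → S → A → ℝ)
    (hπ0 : ∀ k s a, 0 ≤ π k s a) (hπ1 : ∀ k s, ∑ a : A, π k s a = 1)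
    (Q : ℕ → S × A → ℝ)
    (heval : ∀ k, softBellman r γ α p (π k) (Q k) = Q k)
    (himp : ∀ k s a, π (k + 1) s a =
      Real.exp (Q k (s, a) / α) / ∑ b : A, Real.exp (Q k (s, b) / α)) :
    (∀ k sa, Q k sa ≤ Q (k + 1) sa) ∧
    (∃ C : ℝ, ∀ k sa, |Q k sa| ≤ C) ∧
    (∀ sa, ∃ L : ℝ, Tendsto (fun k => Q k sa) atTop (nhds L)) := by
  have hp (sa : S × A) : p sa ∈ stdSimplex ℝ S := ⟨hp0 sa, hp1 sa⟩
  have hπ (k : ℕ) (s : S) : π k s ∈ stdSimplex ℝ A := ⟨hπ0 k s, hπ1 k s⟩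
  have himprove (k : ℕ) (sa : S × A) :
      Q k sa ≤ softBellman r γ α p (π (k + 1)) (Q k) sa :=
    (congrFun (heval k) sa).symm.trans_le <| softBellman_le_softBellman_softmax hγ0.le hα hp0
      (hπ k) (fun s => funext (himp k s)) sa
  have hmono (k : ℕ) (sa : S × A) : Q k sa ≤ Q (k + 1) sa :=
    le_of_le_softBellman hγ0.le hγ1 hp (hπ (k + 1)) (himprove k) (heval (k + 1)) sa
  obtain ⟨C, hC⟩ : ∃ C, ∀ k sa, |Q k sa| ≤ C :=
    ⟨_, fun k => abs_le_of_softBellman_eq hr hγ0.le hγ1 hα hp (hπ k) (heval k)⟩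
  refine ⟨hmono, ⟨C, hC⟩, fun sa => ⟨_, tendsto_atTop_ciSup
    (monotone_nat_of_le_succ fun k => hmono k sa) ⟨C, ?_⟩⟩⟩
  rintro _ ⟨k, rfl⟩
  exact le_of_abs_le (hC k sa)

/-- Convergence of soft policy iteration: in a discounted MDP with finite
state and action spaces, bounded reward, and `γ ∈ (0,1)`, the sequence of
soft Q-functions `Q^{π_k}` produced by alternating exact soft policy
evaluation (`Q k` is the fixed point of `T^{π_k}`) and exact soft policy
improvement (`π_{k+1}(·|s)` is the entropy-regularized argmax, i.e. the
softmax of `Q^{π_k}(s,·)/α`) is pointwise monotonically nondecreasing and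
uniformly bounded, hence converges pointwise. -/
theorem soft_policy_iteration_converges
    {S A : Type*} [Fintype S] [Fintype A] [Nonempty S] [Nonempty A]
    (r : S × A → ℝ) (R_max : ℝ) (hr : ∀ sa, |r sa| ≤ R_max)
    (γ α : ℝ) (hγ0 : 0 < γ) (hγ1 : γ < 1) (hα : 0 < α)
    (p : S × A → S → ℝ) (hp0 : ∀ sa s', 0 ≤ p sa s')
    (hp1 : ∀ sa, ∑ s' : S, p sa s' = 1)
    (π : ℕ → S → A → ℝ)
    (hπ0 : ∀ k s a, 0 ≤ π k s a) (hπ1 : ∀ k s, ∑ a : A, π k s a = 1)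
    (Q : ℕ → S × A → ℝ)
    (heval : ∀ k, softBellman r γ α p (π k) (Q k) = Q k)
    (himp : ∀ k s a, π (k + 1) s a =
      Real.exp (Q k (s, a) / α) / ∑ b : A, Real.exp (Q k (s, b) / α)) :
    (∀ k sa, Q k sa ≤ Q (k + 1) sa) ∧
    (∃ C : ℝ, ∀ k sa, |Q k sa| ≤ C) ∧
    (∀ sa, ∃ L : ℝ, Tendsto (fun k => Q k sa) atTop (nhds L)) :=
  soft_policy_iteration_converges_general r R_max hr γ α hγ0 hγ1 hα p hp0 hp1 π hπ0 hπ1 Q heval himp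
end

section
/- At convergence of soft policy iteration the limiting policy is optimal: if π† satisfies E_{a∼π†}[Q^{π†}(s,a) − α log π†(a|s)] ≥ E_{a∼π}[Q^{π†}(s,a) − α log π(a|s)] for every policy π and every state s, then Q^{π†}(s,a) ≥ Q^{π}(s,a) for all policies π and all (s,a). -/
open Finset

/-- Global optimality at convergence of soft policy iteration: if `π†`
satisfies `E_{a∼π†}[Q^{π†}(s,a) − α log π†(a|s)] ≥
E_{a∼π}[Q^{π†}(s,a) − α log π(a|s)]` for every policy `π` and every state `s`,
then `Q^{π†}(s,a) ≥ Q^{π}(s,a)` for all policies `π` and all `(s,a)`, where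
`Q^π` denotes the (unique bounded) fixed point of the soft Bellman operator
of `π`. -/
theorem soft_policy_iteration_global_optimality
    {S A : Type*} [Fintype S] [Fintype A] [Nonempty S] [Nonempty A]
    (r : S × A → ℝ) (γ α : ℝ) (hγ0 : 0 < γ) (hγ1 : γ < 1) (hα : 0 < α)
    (p : S × A → S → ℝ) (hp0 : ∀ sa s', 0 ≤ p sa s')
    (hp1 : ∀ sa, ∑ s' : S, p sa s' = 1)
    (πdag : S → A → ℝ)
    (hπdag0 : ∀ s a, 0 ≤ πdag s a) (hπdag1 : ∀ s, ∑ a : A, πdag s a = 1)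
    (Qdag : S × A → ℝ) (hQdag : softBellman r γ α p πdag Qdag = Qdag)
    (hopt : ∀ π : S → A → ℝ, (∀ s a, 0 ≤ π s a) → (∀ s, ∑ a : A, π s a = 1) →
      ∀ s : S, (∑ a : A, π s a * (Qdag (s, a) - α * Real.log (π s a))) ≤
        ∑ a : A, πdag s a * (Qdag (s, a) - α * Real.log (πdag s a))) :
    ∀ π : S → A → ℝ, (∀ s a, 0 ≤ π s a) → (∀ s, ∑ a : A, π s a = 1) →
      ∀ Qπ : S × A → ℝ, softBellman r γ α p π Qπ = Qπ →
        ∀ s a, Qπ (s, a) ≤ Qdag (s, a) := by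
  intro π hπ0 hπ1 Qπ hQπ s a
  set f : S × A → ℝ := fun sa => Qπ sa - Qdag sa with hf
  obtain ⟨sa₀, hsa₀⟩ := Finite.exists_max f
  have key : ∀ sa : S × A, f sa ≤ γ * f sa₀ := by
    intro sa
    have h1 : Qπ sa = r sa + γ * ∑ s' : S, p sa s' *
        ∑ a' : A, π s' a' * (Qπ (s', a') - α * Real.log (π s' a')) := by
      conv_lhs => rw [← hQπ]
      rfl
    have h2 : Qdag sa = r sa + γ * ∑ s' : S, p sa s' *
        ∑ a' : A, πdag s' a' * (Qdag (s', a') - α * Real.log (πdag s' a')) := by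
      conv_lhs => rw [← hQdag]
      rfl
    have hdiff : f sa = γ * ∑ s' : S, p sa s' *
        ((∑ a' : A, π s' a' * (Qπ (s', a') - α * Real.log (π s' a'))) -
         (∑ a' : A, πdag s' a' * (Qdag (s', a') - α * Real.log (πdag s' a')))) := by
      have e : (∑ s' : S, p sa s' *
          ((∑ a' : A, π s' a' * (Qπ (s', a') - α * Real.log (π s' a'))) -
           (∑ a' : A, πdag s' a' * (Qdag (s', a') - α * Real.log (πdag s' a'))))) =
          (∑ s' : S, p sa s' * ∑ a' : A, π s' a' * (Qπ (s', a') - α * Real.log (π s' a'))) -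
          (∑ s' : S, p sa s' * ∑ a' : A, πdag s' a' * (Qdag (s', a') - α * Real.log (πdag s' a'))) := by
        rw [← Finset.sum_sub_distrib]
        exact Finset.sum_congr rfl fun x _ => by ring
      simp only [hf]
      rw [e, h1, h2]
      ring
    have hinner : ∀ s' : S,
        (∑ a' : A, π s' a' * (Qπ (s', a') - α * Real.log (π s' a'))) -
        (∑ a' : A, πdag s' a' * (Qdag (s', a') - α * Real.log (πdag s' a'))) ≤ f sa₀ := by
      intro s'
      have h3 := hopt π hπ0 hπ1 s'
      have h4 : (∑ a' : A, π s' a' * (Qπ (s', a') - α * Real.log (π s' a'))) -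
          (∑ a' : A, π s' a' * (Qdag (s', a') - α * Real.log (π s' a'))) =
          ∑ a' : A, π s' a' * f (s', a') := by
        rw [← Finset.sum_sub_distrib]
        apply Finset.sum_congr rfl
        intro x _
        simp only [hf]
        ring
      have h5 : ∑ a' : A, π s' a' * f (s', a') ≤ ∑ a' : A, π s' a' * f sa₀ := by
        apply Finset.sum_le_sum
        intro x _
        exact mul_le_mul_of_nonneg_left (hsa₀ (s', x)) (hπ0 s' x)
      have h6 : ∑ a' : A, π s' a' * f sa₀ = f sa₀ := by
        rw [← Finset.sum_mul, hπ1 s', one_mul]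
      nlinarith [h3, h4, h5, h6]
    rw [hdiff]
    apply mul_le_mul_of_nonneg_left _ (le_of_lt hγ0)
    calc ∑ s' : S, p sa s' *
        ((∑ a' : A, π s' a' * (Qπ (s', a') - α * Real.log (π s' a'))) -
         (∑ a' : A, πdag s' a' * (Qdag (s', a') - α * Real.log (πdag s' a'))))
        ≤ ∑ s' : S, p sa s' * f sa₀ := by
          apply Finset.sum_le_sum
          intro s' _
          exact mul_le_mul_of_nonneg_left (hinner s') (hp0 sa s')
      _ = f sa₀ := by rw [← Finset.sum_mul, hp1 sa, one_mul]
  have hM : f sa₀ ≤ 0 := by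
    have := key sa₀
    nlinarith
  have := key (s, a)
  have : f (s, a) ≤ 0 := le_trans this (by nlinarith)
  simpa [hf] using this
end
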